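/- Let Λ and Σ be entanglement witnesses, let 0 < p < 1, and set Ω = (1−p)·Λ + p·Σ. Then a pair (φ₀,χ₀) of nonzero vectors is a zero of Ω if and only if it is a zero of both Λ and Σ; moreover, for any zero (φ₀,χ₀) of Ω, a pair (ξ,ζ) is a Hessian zero of Ω at (φ₀,χ₀) if and only if it is a Hessian zero of both Λ and Σ at (φ₀,χ₀). -/
import Mathlib


open Matrix
open scoped ComplexOrder

noncomputable section

namespace EW

/-- Complex square matrices indexed by `Fin Na × Fin Nb`. -/
abbrev Mat (Na Nb : ℕ) := Matrix (Fin Na × Fin Nb) (Fin Na × Fin Nb) ℂ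

/-- Kronecker product of vectors: `(φ⊗χ)_(i,j) = φ_i · χ_j`. -/
def kron {Na Nb : ℕ} (φ : Fin Na → ℂ) (χ : Fin Nb → ℂ) : Fin Na × Fin Nb → ℂ :=
  fun p => φ p.1 * χ p.2

/-- Sesquilinear pairing `xᴴ A y`. -/
def pair {n : Type*} [Fintype n] (A : Matrix n n ℂ) (x y : n → ℂ) : ℂ :=
  star x ⬝ᵥ A.mulVec y

/-- The biquadratic form `f_A(φ,χ) = (φ⊗χ)ᴴ A (φ⊗χ)`. -/
def biquad {Na Nb : ℕ} (A : Mat Na Nb) (φ : Fin Na → ℂ) (χ : Fin Nb → ℂ) : ℂ :=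
  pair A (kron φ χ) (kron φ χ)

/-- An entanglement witness: a Hermitian matrix whose biquadratic form is nonnegative. -/
def IsWitness {Na Nb : ℕ} (A : Mat Na Nb) : Prop :=
  A.IsHermitian ∧ ∀ φ χ, 0 ≤ biquad A φ χ

/-- `S₁°`, the set of trace-one entanglement witnesses. -/
def witnessSet (Na Nb : ℕ) : Set (Mat Na Nb) :=
  { Ω | IsWitness Ω ∧ Ω.trace = 1 }

/-- A zero of a witness: a pair of nonzero vectors where the biquadratic form vanishes. -/
def IsZeroOf {Na Nb : ℕ} (Ω : Mat Na Nb) (φ₀ : Fin Na → ℂ) (χ₀ : Fin Nb → ℂ) : Prop :=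
  φ₀ ≠ 0 ∧ χ₀ ≠ 0 ∧ biquad Ω φ₀ χ₀ = 0

/-- The Hessian form
`H_A(φ₀,χ₀;ξ,ζ) = Re[(ξ⊗χ₀)ᴴA(ξ⊗χ₀) + (φ₀⊗ζ)ᴴA(φ₀⊗ζ) + 2(φ₀⊗ζ)ᴴA(ξ⊗χ₀) + 2(φ₀⊗χ₀)ᴴA(ξ⊗ζ)]`. -/
def hessForm {Na Nb : ℕ} (A : Mat Na Nb) (φ₀ : Fin Na → ℂ) (χ₀ : Fin Nb → ℂ)
    (ξ : Fin Na → ℂ) (ζ : Fin Nb → ℂ) : ℝ :=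
  (pair A (kron ξ χ₀) (kron ξ χ₀) + pair A (kron φ₀ ζ) (kron φ₀ ζ)
    + 2 * pair A (kron φ₀ ζ) (kron ξ χ₀) + 2 * pair A (kron φ₀ χ₀) (kron ξ ζ)).re

/-- A Hessian zero of `Ω` at the zero `(φ₀,χ₀)`. -/
def IsHessianZeroAt {Na Nb : ℕ} (Ω : Mat Na Nb) (φ₀ : Fin Na → ℂ) (χ₀ : Fin Nb → ℂ)
    (ξ : Fin Na → ℂ) (ζ : Fin Nb → ℂ) : Prop :=
  (ξ, ζ) ≠ (0, 0) ∧ star φ₀ ⬝ᵥ ξ = 0 ∧ star χ₀ ⬝ᵥ ζ = 0 ∧ hessForm Ω φ₀ χ₀ ξ ζ = 0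

/-- A quadratic witness: a witness all of whose zeros have no Hessian zeros. -/
def IsQuadraticWitness {Na Nb : ℕ} (Ω : Mat Na Nb) : Prop :=
  IsWitness Ω ∧ ∀ φ₀ χ₀, IsZeroOf Ω φ₀ χ₀ → ∀ ξ ζ, ¬ IsHessianZeroAt Ω φ₀ χ₀ ξ ζ

/-- Partial transpose with respect to the second factor. -/
def ptrans {Na Nb : ℕ} (A : Mat Na Nb) : Mat Na Nb :=
  fun p q => A (p.1, q.2) (q.1, p.2)

/-- Euclidean norm of a complex vector. -/
def enorm {n : Type*} [Fintype n] (x : n → ℂ) : ℝ :=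
  Real.sqrt (star x ⬝ᵥ x).re

/-- Frobenius norm of a matrix. -/
def frobNorm {Na Nb : ℕ} (A : Mat Na Nb) : ℝ :=
  Real.sqrt (∑ i, ∑ j, ‖A i j‖ ^ 2)

/-- `S₁`, the set of separable states: the convex hull of normalized pure product states. -/
def sepSet (Na Nb : ℕ) : Set (Mat Na Nb) :=
  convexHull ℝ { M | ∃ (φ : Fin Na → ℂ) (χ : Fin Nb → ℂ), enorm (kron φ χ) = 1 ∧
    M = Matrix.vecMulVec (kron φ χ) (star (kron φ χ)) }

/-- `Γ` satisfies the constraint system of the witness `Ω`. -/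
def SatisfiesConstraints {Na Nb : ℕ} (Ω Γ : Mat Na Nb) : Prop :=
  (∀ φ₀ χ₀, IsZeroOf Ω φ₀ χ₀ →
    (∀ φ, pair Γ (kron φ χ₀) (kron φ₀ χ₀) = 0) ∧
    (∀ χ, pair Γ (kron φ₀ χ) (kron φ₀ χ₀) = 0)) ∧
  (∀ φ₀ χ₀, IsZeroOf Ω φ₀ χ₀ → ∀ ξ ζ, IsHessianZeroAt Ω φ₀ χ₀ ξ ζ →
    ∀ ξ' ζ', star φ₀ ⬝ᵥ ξ' = 0 → star χ₀ ⬝ᵥ ζ' = 0 →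
      hessForm Γ φ₀ χ₀ (ξ + ξ') (ζ + ζ') =
        hessForm Γ φ₀ χ₀ ξ ζ + hessForm Γ φ₀ χ₀ ξ' ζ') ∧
  (∀ φ₀ χ₀, IsZeroOf Ω φ₀ χ₀ → ∀ ξ ζ, IsHessianZeroAt Ω φ₀ χ₀ ξ ζ →
    (pair Γ (kron φ₀ ζ) (kron ξ ζ) + pair Γ (kron ξ χ₀) (kron ξ ζ)).re = 0)

end EW


section Aux
open EW

lemma pair_add_left' {n} [Fintype n] (A : Matrix n n ℂ) (x y z : n → ℂ) :
    pair A (x + y) z = pair A x z + pair A y z := by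
  simp [pair, star_add, add_dotProduct]

lemma pair_add_right' {n} [Fintype n] (A : Matrix n n ℂ) (x y z : n → ℂ) :
    pair A x (y + z) = pair A x y + pair A x z := by
  simp [pair, mulVec_add, dotProduct_add]

lemma pair_smul_left' {n} [Fintype n] (A : Matrix n n ℂ) (c : ℂ) (x y : n → ℂ) :
    pair A (c • x) y = star c * pair A x y := by
  simp [pair, star_smul, smul_dotProduct, smul_eq_mul]

lemma pair_smul_right' {n} [Fintype n] (A : Matrix n n ℂ) (c : ℂ) (x y : n → ℂ) :
    pair A x (c • y) = c * pair A x y := by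
  simp [pair, mulVec_smul, dotProduct_smul, smul_eq_mul]

lemma pair_add_mat' {n} [Fintype n] (A B : Matrix n n ℂ) (x y : n → ℂ) :
    pair (A + B) x y = pair A x y + pair B x y := by
  simp [pair, add_mulVec, dotProduct_add]

lemma pair_smul_mat' {n} [Fintype n] (r : ℝ) (A : Matrix n n ℂ) (x y : n → ℂ) :
    pair (r • A) x y = (r : ℂ) * pair A x y := by
  simp [pair, smul_mulVec, dotProduct_smul, Complex.real_smul]

lemma pair_conj' {n} [Fintype n] {A : Matrix n n ℂ} (hA : A.IsHermitian) (x y : n → ℂ) :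
    pair A y x = star (pair A x y) := by
  simp only [pair, dotProduct, mulVec, dotProduct, star_sum, star_mul', Finset.mul_sum,
    Pi.star_apply, star_star]
  rw [Finset.sum_comm]
  refine Finset.sum_congr rfl fun i _ => Finset.sum_congr rfl fun j _ => ?_
  have : star (A i j) = A j i := by rw [← Matrix.conjTranspose_apply, hA]
  rw [this]; ring

lemma kron_expand' {Na Nb : ℕ} (φ₀ ξ : Fin Na → ℂ) (χ₀ ζ : Fin Nb → ℂ) (s : ℂ) :
    kron (φ₀ + s • ξ) (χ₀ + s • ζ) =
      kron φ₀ χ₀ + s • (kron ξ χ₀ + kron φ₀ ζ) + (s^2) • kron ξ ζ := by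
  funext pt
  simp only [kron, Pi.add_apply, Pi.smul_apply, smul_eq_mul]
  ring

lemma biquad_expand' {Na Nb : ℕ} (A : Mat Na Nb) (φ₀ ξ : Fin Na → ℂ) (χ₀ ζ : Fin Nb → ℂ)
    (s : ℝ) :
    biquad A (φ₀ + (s:ℂ) • ξ) (χ₀ + (s:ℂ) • ζ) =
      pair A (kron φ₀ χ₀) (kron φ₀ χ₀)
      + (s:ℂ) * (pair A (kron φ₀ χ₀) (kron ξ χ₀ + kron φ₀ ζ)
          + pair A (kron ξ χ₀ + kron φ₀ ζ) (kron φ₀ χ₀))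
      + (s:ℂ)^2 * (pair A (kron ξ χ₀ + kron φ₀ ζ) (kron ξ χ₀ + kron φ₀ ζ)
          + pair A (kron φ₀ χ₀) (kron ξ ζ) + pair A (kron ξ ζ) (kron φ₀ χ₀))
      + (s:ℂ)^3 * (pair A (kron ξ χ₀ + kron φ₀ ζ) (kron ξ ζ)
          + pair A (kron ξ ζ) (kron ξ χ₀ + kron φ₀ ζ))
      + (s:ℂ)^4 * pair A (kron ξ ζ) (kron ξ ζ) := by
  rw [biquad, kron_expand']
  simp only [pair_add_left', pair_add_right', pair_smul_left', pair_smul_right', star_pow,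
    Complex.star_def, Complex.conj_ofReal]
  ring

lemma quad_ineq' {Na Nb : ℕ} {A : Mat Na Nb} (hA : IsWitness A)
    {φ₀ : Fin Na → ℂ} {χ₀ : Fin Nb → ℂ} (h0 : biquad A φ₀ χ₀ = 0)
    (ξ : Fin Na → ℂ) (ζ : Fin Nb → ℂ) (t : ℝ) :
    0 ≤ 2 * hessForm A φ₀ χ₀ ξ ζ * t^2 + 2 * (biquad A ξ ζ).re * t^4 := by
  have e1 := biquad_expand' A φ₀ ξ χ₀ ζ t
  have e2 := biquad_expand' A φ₀ ξ χ₀ ζ (-t)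
  have h1 := hA.2 (φ₀ + (t:ℂ) • ξ) (χ₀ + (t:ℂ) • ζ)
  have h2 := hA.2 (φ₀ + ((-t:ℝ):ℂ) • ξ) (χ₀ + ((-t:ℝ):ℂ) • ζ)
  have h0' : pair A (kron φ₀ χ₀) (kron φ₀ χ₀) = 0 := h0
  have hab : pair A (kron ξ χ₀) (kron φ₀ ζ) = star (pair A (kron φ₀ ζ) (kron ξ χ₀)) :=
    pair_conj' hA.1 _ _
  have hwu : pair A (kron ξ ζ) (kron φ₀ χ₀) = star (pair A (kron φ₀ χ₀) (kron ξ ζ)) :=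
    pair_conj' hA.1 _ _
  have hvv : pair A (kron ξ χ₀ + kron φ₀ ζ) (kron ξ χ₀ + kron φ₀ ζ)
      = pair A (kron ξ χ₀) (kron ξ χ₀) + pair A (kron ξ χ₀) (kron φ₀ ζ)
        + pair A (kron φ₀ ζ) (kron ξ χ₀) + pair A (kron φ₀ ζ) (kron φ₀ ζ) := by
    rw [pair_add_left', pair_add_right', pair_add_right']; ring
  have key : (pair A (kron ξ χ₀ + kron φ₀ ζ) (kron ξ χ₀ + kron φ₀ ζ)
      + pair A (kron φ₀ χ₀) (kron ξ ζ) + pair A (kron ξ ζ) (kron φ₀ χ₀)).re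
      = hessForm A φ₀ χ₀ ξ ζ := by
    rw [hvv, hab, hwu, hessForm]
    simp [Complex.add_re, Complex.mul_re]
    ring
  have hx : biquad A (φ₀ + (t:ℂ) • ξ) (χ₀ + (t:ℂ) • ζ)
      + biquad A (φ₀ + ((-t:ℝ):ℂ) • ξ) (χ₀ + ((-t:ℝ):ℂ) • ζ)
      = ((2*t^2:ℝ):ℂ) * (pair A (kron ξ χ₀ + kron φ₀ ζ) (kron ξ χ₀ + kron φ₀ ζ)
          + pair A (kron φ₀ χ₀) (kron ξ ζ) + pair A (kron ξ ζ) (kron φ₀ χ₀))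
        + ((2*t^4:ℝ):ℂ) * pair A (kron ξ ζ) (kron ξ ζ) := by
    rw [e1, e2, h0']
    push_cast
    ring
  have hsum : 0 ≤ (biquad A (φ₀ + (t:ℂ) • ξ) (χ₀ + (t:ℂ) • ζ)
      + biquad A (φ₀ + ((-t:ℝ):ℂ) • ξ) (χ₀ + ((-t:ℝ):ℂ) • ζ)).re := by
    rw [Complex.add_re]
    have h1r' := (Complex.le_def.mp h1).1
    have h2r' := (Complex.le_def.mp h2).1
    simpa using add_nonneg h1r' h2r'
  rw [hx] at hsum
  simp only [Complex.add_re, Complex.re_ofReal_mul] at hsum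
  simp only [Complex.add_re] at key
  rw [key] at hsum
  have hW : (pair A (kron ξ ζ) (kron ξ ζ)).re = (biquad A ξ ζ).re := rfl
  rw [hW] at hsum
  linarith

lemma hess_nonneg' {Na Nb : ℕ} {A : Mat Na Nb} (hA : IsWitness A)
    {φ₀ : Fin Na → ℂ} {χ₀ : Fin Nb → ℂ} (h0 : biquad A φ₀ χ₀ = 0)
    (ξ : Fin Na → ℂ) (ζ : Fin Nb → ℂ) :
    0 ≤ hessForm A φ₀ χ₀ ξ ζ := by
  set c := hessForm A φ₀ χ₀ ξ ζ with hc
  set e := (biquad A ξ ζ).re with he'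
  have he : 0 ≤ e := (Complex.le_def.mp (hA.2 ξ ζ)).1
  by_contra hneg
  push_neg at hneg
  rcases eq_or_lt_of_le he with heq | hpos
  · have h1 := quad_ineq' hA h0 ξ ζ 1
    rw [← he', ← hc] at h1
    nlinarith
  · set t := Real.sqrt (-c/(2*e)) with ht
    have ht2 : t^2 = -c/(2*e) := Real.sq_sqrt (div_nonneg (by linarith) (by linarith))
    have h1 := quad_ineq' hA h0 ξ ζ t
    rw [← he', ← hc] at h1
    have h2e : (2*e) ≠ 0 := by positivity
    have hx : 2*c*t^2 + 2*e*t^4 = -c^2/(2*e) := by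
      have ht4 : t^4 = (t^2)^2 := by ring
      rw [ht4, ht2]
      field_simp
      ring
    rw [hx] at h1
    have hlt : -c^2/(2*e) < 0 := div_neg_of_neg_of_pos (by nlinarith) (by linarith)
    linarith

lemma biquad_comb' {Na Nb : ℕ} (Λ Sg : Mat Na Nb) (p : ℝ)
    (φ : Fin Na → ℂ) (χ : Fin Nb → ℂ) :
    biquad ((1 - p) • Λ + p • Sg) φ χ
      = ((1-p:ℝ):ℂ) * biquad Λ φ χ + (p:ℂ) * biquad Sg φ χ := by
  simp [biquad, pair_add_mat', pair_smul_mat']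

lemma hess_comb' {Na Nb : ℕ} (Λ Sg : Mat Na Nb) (p : ℝ)
    (φ₀ ξ : Fin Na → ℂ) (χ₀ ζ : Fin Nb → ℂ) :
    hessForm ((1 - p) • Λ + p • Sg) φ₀ χ₀ ξ ζ
      = (1-p) * hessForm Λ φ₀ χ₀ ξ ζ + p * hessForm Sg φ₀ χ₀ ξ ζ := by
  simp only [hessForm, pair_add_mat', pair_smul_mat']
  rw [show ((1-p:ℝ):ℂ) * pair Λ (kron ξ χ₀) (kron ξ χ₀) + (p:ℂ) * pair Sg (kron ξ χ₀) (kron ξ χ₀)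
      + (((1-p:ℝ):ℂ) * pair Λ (kron φ₀ ζ) (kron φ₀ ζ) + (p:ℂ) * pair Sg (kron φ₀ ζ) (kron φ₀ ζ))
      + 2 * (((1-p:ℝ):ℂ) * pair Λ (kron φ₀ ζ) (kron ξ χ₀) + (p:ℂ) * pair Sg (kron φ₀ ζ) (kron ξ χ₀))
      + 2 * (((1-p:ℝ):ℂ) * pair Λ (kron φ₀ χ₀) (kron ξ ζ) + (p:ℂ) * pair Sg (kron φ₀ χ₀) (kron ξ ζ))
      = ((1-p:ℝ):ℂ) * (pair Λ (kron ξ χ₀) (kron ξ χ₀) + pair Λ (kron φ₀ ζ) (kron φ₀ ζ)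
          + 2 * pair Λ (kron φ₀ ζ) (kron ξ χ₀) + 2 * pair Λ (kron φ₀ χ₀) (kron ξ ζ))
        + ((p:ℝ):ℂ) * (pair Sg (kron ξ χ₀) (kron ξ χ₀) + pair Sg (kron φ₀ ζ) (kron φ₀ ζ)
          + 2 * pair Sg (kron φ₀ ζ) (kron ξ χ₀) + 2 * pair Sg (kron φ₀ χ₀) (kron ξ ζ)) from by ring]
  simp [Complex.add_re, Complex.re_ofReal_mul]

end Aux

open EW
theorem zeros_of_convex_combination (Na Nb : ℕ) (Λ Sg : Mat Na Nb)
    (hΛ : IsWitness Λ) (hSg : IsWitness Sg)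
    (p : ℝ) (hp0 : 0 < p) (hp1 : p < 1)
    (Ω : Mat Na Nb) (hΩ : Ω = (1 - p) • Λ + p • Sg) :
    (∀ (φ₀ : Fin Na → ℂ) (χ₀ : Fin Nb → ℂ),
      IsZeroOf Ω φ₀ χ₀ ↔ IsZeroOf Λ φ₀ χ₀ ∧ IsZeroOf Sg φ₀ χ₀) ∧
    (∀ (φ₀ : Fin Na → ℂ) (χ₀ : Fin Nb → ℂ), IsZeroOf Ω φ₀ χ₀ →
      ∀ ξ ζ, IsHessianZeroAt Ω φ₀ χ₀ ξ ζ ↔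
        IsHessianZeroAt Λ φ₀ χ₀ ξ ζ ∧ IsHessianZeroAt Sg φ₀ χ₀ ξ ζ) := by
  subst hΩ
  have hq : (0:ℝ) ≤ 1 - p := by linarith
  have hqc : ((1-p:ℝ):ℂ) ≠ 0 := by
    simp only [ne_eq, Complex.ofReal_eq_zero]
    linarith
  have hpc : ((p:ℝ):ℂ) ≠ 0 := by
    simp only [ne_eq, Complex.ofReal_eq_zero]
    linarith
  have part1 : ∀ (φ₀ : Fin Na → ℂ) (χ₀ : Fin Nb → ℂ),
      IsZeroOf ((1 - p) • Λ + p • Sg) φ₀ χ₀ ↔ IsZeroOf Λ φ₀ χ₀ ∧ IsZeroOf Sg φ₀ χ₀ := by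
    intro φ₀ χ₀
    constructor
    · rintro ⟨hφ, hχ, hz⟩
      rw [biquad_comb'] at hz
      have c1 : (0:ℂ) ≤ ((1-p:ℝ):ℂ) * biquad Λ φ₀ χ₀ :=
        mul_nonneg (by exact_mod_cast Complex.zero_le_real.mpr hq) (hΛ.2 _ _)
      have c2 : (0:ℂ) ≤ ((p:ℝ):ℂ) * biquad Sg φ₀ χ₀ :=
        mul_nonneg (by exact_mod_cast Complex.zero_le_real.mpr hp0.le) (hSg.2 _ _)
      have hboth := (add_eq_zero_iff_of_nonneg c1 c2).mp hz
      have hzΛ : biquad Λ φ₀ χ₀ = 0 := by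
        rcases mul_eq_zero.mp hboth.1 with h | h
        · exact absurd h hqc
        · exact h
      have hzS : biquad Sg φ₀ χ₀ = 0 := by
        rcases mul_eq_zero.mp hboth.2 with h | h
        · exact absurd h hpc
        · exact h
      exact ⟨⟨hφ, hχ, hzΛ⟩, ⟨hφ, hχ, hzS⟩⟩
    · rintro ⟨⟨hφ, hχ, h1⟩, ⟨-, -, h2⟩⟩
      refine ⟨hφ, hχ, ?_⟩
      rw [biquad_comb', h1, h2]
      ring
  refine ⟨part1, ?_⟩
  intro φ₀ χ₀ hz ξ ζ
  obtain ⟨hzΛ, hzS⟩ := (part1 φ₀ χ₀).mp hz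
  have hnΛ : 0 ≤ hessForm Λ φ₀ χ₀ ξ ζ := hess_nonneg' hΛ hzΛ.2.2 ξ ζ
  have hnS : 0 ≤ hessForm Sg φ₀ χ₀ ξ ζ := hess_nonneg' hSg hzS.2.2 ξ ζ
  constructor
  · rintro ⟨hne, ho1, ho2, hval⟩
    rw [hess_comb'] at hval
    have hΛ0 : hessForm Λ φ₀ χ₀ ξ ζ = 0 := by nlinarith
    have hS0 : hessForm Sg φ₀ χ₀ ξ ζ = 0 := by nlinarith
    exact ⟨⟨hne, ho1, ho2, hΛ0⟩, ⟨hne, ho1, ho2, hS0⟩⟩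
  · rintro ⟨⟨hne, ho1, ho2, hv1⟩, ⟨-, -, -, hv2⟩⟩
    refine ⟨hne, ho1, ho2, ?_⟩
    rw [hess_comb', hv1, hv2]
    ring
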